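/- arXiv:2007.13594 — 5 statements merged into one kernel-verified Lean document; each statement's English description precedes it below -/
import Mathlib

section
/- Let 0 < k < d be positive integers. If n is a sufficiently large multiple of k, then there exists a collection S of n^k many k-element subsets of {0,1,...,kn-1} such that (a) S contains every k-element subset of {0,...,d-1}, and (b) every element of {0,1,...,kn-1} appears in the same number of sets of S. -/
/-!
Work in the cyclic group `ℤ/kn`. A family of sets closed under translation has all degrees equal,
so it suffices to find a translation-closed family of `n ^ k` sets of size `k` containing the
`k`-subsets of `[0, d)`. Call a `k`-set a `w`-window set if it is a translate `t + B` with
`0 ∈ B ⊆ [0, w]`. When `2w < kn`, the set determines `t` (both `t - t'` and `t' - t` would lie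
in `[0, w]`), so the `w`-window sets form `C(w, k - 1)` free orbits of size `kn`. For `w = d - 1`
they contain the `k`-subsets of `[0, d)` and number at most `n ^ k`; for `w ≈ kn / 2` they number
at least `n ^ k`. Since `k ∣ n` gives `kn ∣ n ^ k`, adding whole orbits of the latter to the
former reaches exactly `n ^ k` sets.
-/

open Finset Pointwise
open scoped Nat

section Translation

variable {G : Type*} [AddGroup G] [DecidableEq G]

def TranslationInvariant (S : Finset (Finset G)) : Prop :=
  ∀ t : G, ∀ A ∈ S, t +ᵥ A ∈ S

namespace TranslationInvariant

variable {S T : Finset (Finset G)}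

lemma union (hS : TranslationInvariant S) (hT : TranslationInvariant T) :
    TranslationInvariant (S ∪ T) := by
  intro t A hA
  rcases mem_union.mp hA with hA | hA
  · exact mem_union_left _ (hS t A hA)
  · exact mem_union_right _ (hT t A hA)

lemma neg_vadd_mem (hS : TranslationInvariant S) {t : G} {A : Finset G} (h : t +ᵥ A ∈ S) :
    A ∈ S := by
  simpa using hS (-t) _ h

lemma card_filter_mem_eq (hS : TranslationInvariant S) (x y : G) :
    #{A ∈ S | x ∈ A} = #{A ∈ S | y ∈ A} := by
  obtain ⟨t, rfl⟩ : ∃ t : G, y = t +ᵥ x := ⟨y - x, (sub_add_cancel y x).symm⟩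
  refine card_nbij' (t +ᵥ ·) (-t +ᵥ ·) ?_ ?_ (fun A _ ↦ neg_vadd_vadd t A)
    (fun A _ ↦ vadd_neg_vadd t A)
  · intro A hA
    simp only [coe_filter, Set.mem_ofPred_eq] at hA ⊢
    exact ⟨hS t A hA.1, vadd_mem_vadd_finset hA.2⟩
  · intro A hA
    simp only [coe_filter, Set.mem_ofPred_eq] at hA ⊢
    exact ⟨hS (-t) A hA.1, mem_neg_vadd_finset_iff.mpr hA.2⟩

end TranslationInvariant

lemma translationInvariant_image_vadd [Fintype G] (A : Finset G) :
    TranslationInvariant ((univ : Finset G).image (· +ᵥ A)) := by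
  intro t B hB
  obtain ⟨s, -, rfl⟩ := mem_image.mp hB
  exact mem_image.mpr ⟨t + s, mem_univ _, add_vadd t s A⟩

lemma exists_translationInvariant_between [Fintype G] {O F : Finset (Finset G)}
    (hF : TranslationInvariant F) (hfree : ∀ A ∈ F, ∀ t : G, t +ᵥ A = A → t = 0)
    (hO : TranslationInvariant O) (hOF : O ⊆ F) (m : ℕ)
    (hm : #O + m * Fintype.card G ≤ #F) :
    ∃ S, TranslationInvariant S ∧ O ⊆ S ∧ S ⊆ F ∧ #S = #O + m * Fintype.card G := by
  induction m generalizing O with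
  | zero => exact ⟨O, hO, subset_rfl, hOF, by simp⟩
  | succ m ih =>
    have hG := Fintype.card_pos (α := G)
    obtain ⟨A, hAF, hAO⟩ := exists_mem_notMem_of_card_lt_card (s := O) (t := F) (by nlinarith)
    set T := (univ : Finset G).image (· +ᵥ A)
    have hT : #T = Fintype.card G := by
      refine card_image_of_injective _ fun s t hst ↦ ?_
      have h0 := hfree A hAF (-t + s) (by simp only [add_vadd, hst, neg_vadd_vadd])
      exact (neg_add_eq_zero.mp h0).symm
    have hTF : T ⊆ F := fun B hB ↦ by
      obtain ⟨t, -, rfl⟩ := mem_image.mp hB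
      exact hF t A hAF
    have hOT : Disjoint O T := disjoint_right.mpr fun B hB hBO ↦ by
      obtain ⟨t, -, rfl⟩ := mem_image.mp hB
      exact hAO (hO.neg_vadd_mem hBO)
    obtain ⟨S, hS, hOS, hSF, hcard⟩ := ih (hO.union (translationInvariant_image_vadd A))
      (union_subset hOF hTF) (by rw [card_union_of_disjoint hOT, hT]; linarith)
    refine ⟨S, hS, subset_union_left.trans hOS, hSF, ?_⟩
    rw [hcard, card_union_of_disjoint hOT, hT]
    ring

end Translation

section Window

variable {M : ℕ} [NeZero M]

lemma eq_zero_of_val_le_of_val_neg_le {w : ℕ} (hw : 2 * w < M) {s : Fin M} (hs : s.val ≤ w)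
    (hs' : (-s).val ≤ w) : s = 0 := by
  by_contra h
  have hpos : 0 < s.val := Fin.pos_iff_ne_zero.mpr h
  rw [Fin.val_neg', Nat.mod_eq_of_lt (by omega)] at hs'
  omega

def anchoredSets (k : ℕ) (w : Fin M) : Finset (Finset (Fin M)) :=
  {B | #B = k ∧ 0 ∈ B ∧ B ⊆ Iic w}

/-- The `k`-sets lying in some cyclic interval of length `w + 1`. -/
def windowSets (k : ℕ) (w : Fin M) : Finset (Finset (Fin M)) :=
  (univ : Finset (Fin M)) +ᵥ anchoredSets k w

variable {k : ℕ} {w : Fin M}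

lemma card_anchoredSets (hk : 0 < k) : #(anchoredSets k w) = w.val.choose (k - 1) := by
  rw [← tsub_zero w.val, ← Fin.val_zero M, ← Fin.card_Ioc, ← card_powersetCard]
  have h0 : ∀ C ∈ powersetCard (k - 1) (Ioc 0 w), (0 : Fin M) ∉ C :=
    fun C hC h ↦ (mem_Ioc.mp ((mem_powersetCard.mp hC).1 h)).1.false
  refine card_nbij' (·.erase 0) (insert 0) (fun B hB ↦ ?_) (fun C hC ↦ ?_)
    (fun B hB ↦ insert_erase (mem_filter.mp hB).2.2.1) (fun C hC ↦ erase_insert (h0 C hC))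
  · obtain ⟨hBk, hB0, hBw⟩ := (mem_filter.mp hB).2
    refine mem_powersetCard.mpr ⟨fun x hx ↦ ?_, by rw [card_erase_of_mem hB0, hBk]⟩
    obtain ⟨hx0, hxB⟩ := mem_erase.mp hx
    exact mem_Ioc.mpr ⟨Fin.pos_iff_ne_zero.mpr hx0, mem_Iic.mp (hBw hxB)⟩
  · obtain ⟨hCw, hCk⟩ := mem_powersetCard.mp hC
    refine mem_filter.mpr ⟨mem_univ _, ?_, mem_insert_self 0 C, ?_⟩
    · rw [card_insert_of_notMem (h0 C hC), hCk]
      omega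
    · exact insert_subset (mem_Iic.mpr (Fin.zero_le w)) fun x hx ↦
        mem_Iic.mpr (mem_Ioc.mp (hCw hx)).2

lemma eq_of_vadd_eq_vadd_of_mem_anchoredSets (hw : 2 * w.val < M) {s t : Fin M}
    {B C : Finset (Fin M)} (hB : B ∈ anchoredSets k w) (hC : C ∈ anchoredSets k w)
    (h : s +ᵥ B = t +ᵥ C) : s = t := by
  simp only [anchoredSets, mem_filter, mem_univ, true_and] at hB hC
  have hBC : (-t + s) +ᵥ B = C := by rw [add_vadd, h, neg_vadd_vadd]
  have hCB : -(-t + s) +ᵥ C = B := by rw [← hBC, neg_vadd_vadd]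
  have h1 : -t + s ∈ C := by
    have := vadd_mem_vadd_finset (a := -t + s) hB.2.1
    rwa [vadd_eq_add, add_zero, hBC] at this
  have h2 : -(-t + s) ∈ B := by
    have := vadd_mem_vadd_finset (a := -(-t + s)) hC.2.1
    rwa [vadd_eq_add, add_zero, hCB] at this
  have h0 := eq_zero_of_val_le_of_val_neg_le hw (Fin.le_def.mp (mem_Iic.mp (hC.2.2 h1)))
    (Fin.le_def.mp (mem_Iic.mp (hB.2.2 h2)))
  exact (neg_add_eq_zero.mp h0).symm

lemma card_windowSets (hw : 2 * w.val < M) : #(windowSets k w) = M * #(anchoredSets k w) := by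
  rw [windowSets, vadd_def, card_image_of_injOn, card_product, card_univ, Fintype.card_fin]
  rintro ⟨s, B⟩ hsB ⟨t, C⟩ htC h
  simp only [coe_product, coe_univ, Set.mem_prod, Set.mem_univ, true_and, mem_coe] at hsB htC h
  obtain rfl := eq_of_vadd_eq_vadd_of_mem_anchoredSets hw hsB htC h
  rw [vadd_left_cancel_iff] at h
  rw [h]

lemma translationInvariant_windowSets : TranslationInvariant (windowSets k w) := by
  intro t A hA
  obtain ⟨s, -, B, hB, rfl⟩ := mem_vadd.mp hA
  rw [← add_vadd]
  exact vadd_mem_vadd (mem_univ _) hB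

lemma eq_zero_of_vadd_eq_self_of_mem_windowSets (hw : 2 * w.val < M) {A : Finset (Fin M)}
    (hA : A ∈ windowSets k w) {t : Fin M} (h : t +ᵥ A = A) : t = 0 := by
  obtain ⟨s, -, B, hB, rfl⟩ := mem_vadd.mp hA
  rw [← add_vadd] at h
  exact add_eq_right.mp (eq_of_vadd_eq_vadd_of_mem_anchoredSets hw hB hB h)

lemma card_of_mem_windowSets {A : Finset (Fin M)} (hA : A ∈ windowSets k w) : #A = k := by
  obtain ⟨s, -, B, hB, rfl⟩ := mem_vadd.mp hA
  rw [card_vadd_finset]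
  exact (mem_filter.mp hB).2.1

lemma windowSets_mono {w' : Fin M} (h : w ≤ w') : windowSets k w ⊆ windowSets k w' := by
  refine vadd_subset_vadd_left fun B hB ↦ ?_
  simp only [anchoredSets, mem_filter, mem_univ, true_and] at hB ⊢
  exact ⟨hB.1, hB.2.1, hB.2.2.trans (Iic_subset_Iic.mpr h)⟩

lemma mem_windowSets_of_forall_val_le (hk : 0 < k) {A : Finset (Fin M)} (hAk : #A = k)
    (hAw : ∀ a ∈ A, a.val ≤ w.val) : A ∈ windowSets k w := by
  have hA : A.Nonempty := card_pos.mp (by omega)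
  set m := A.min' hA
  refine mem_vadd.mpr ⟨m, mem_univ _, -m +ᵥ A, ?_, vadd_neg_vadd m A⟩
  simp only [anchoredSets, mem_filter, mem_univ, true_and]
  refine ⟨(card_vadd_finset _ _).trans hAk,
    mem_neg_vadd_finset_iff.mpr (by simpa using A.min'_mem hA), fun x hx ↦ ?_⟩
  obtain ⟨a, ha, rfl⟩ := mem_vadd_finset.mp hx
  have hma : m ≤ a := A.min'_le a ha
  rw [mem_Iic, Fin.le_def, vadd_eq_add, neg_add_eq_sub, Fin.sub_val_of_le hma]
  exact (Nat.sub_le _ _).trans (hAw a ha)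

end Window

lemma two_mul_pow_self_le {m : ℕ} (hm : 0 < m) : 2 * m ^ m ≤ (m + 1) ^ m := by
  have hm' : (0 : ℝ) < m := by exact_mod_cast hm
  have hbern := one_add_mul_le_pow (a := (m : ℝ)⁻¹) (by linarith [inv_pos.mpr hm']) m
  rw [mul_inv_cancel₀ hm'.ne'] at hbern
  have : ((m + 1 : ℕ) : ℝ) ^ m = (m : ℝ) ^ m * (1 + (m : ℝ)⁻¹) ^ m := by
    rw [← mul_pow]; field_simp; push_cast; ring
  exact_mod_cast (show (2 * (m : ℝ) ^ m) ≤ ((m + 1 : ℕ) : ℝ) ^ m by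
    rw [this]; nlinarith [pow_pos hm' m])

lemma factorial_mul_two_pow_le (j : ℕ) : j ! * 2 ^ j ≤ (j + 1) ^ j := by
  induction j with
  | zero => simp
  | succ j ih =>
    calc (j + 1)! * 2 ^ (j + 1) = 2 * (j + 1) * (j ! * 2 ^ j) := by
          rw [Nat.factorial_succ, pow_succ]; ring
      _ ≤ 2 * (j + 1) * (j + 1) ^ j := by gcongr
      _ = 2 * (j + 1) ^ (j + 1) := by ring
      _ ≤ (j + 1 + 1) ^ (j + 1) := two_mul_pow_self_le j.succ_pos

lemma pow_le_succ_mul_sub_two_pow {n : ℕ} : ∀ {j : ℕ}, 2 * j + 2 ≤ n →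
    n ^ j ≤ (j + 1) * (n - 2) ^ j
  | 0, _ => by simp
  | j + 1, hn => by
    have hstep : n * (j + 1) ≤ (j + 2) * (n - 2) := by
      obtain ⟨m, rfl⟩ : ∃ m, n = m + 2 := ⟨n - 2, by omega⟩
      rw [Nat.add_sub_cancel]; nlinarith
    calc n ^ (j + 1) = n * n ^ j := pow_succ' n j
      _ ≤ n * ((j + 1) * (n - 2) ^ j) := by gcongr; exact pow_le_succ_mul_sub_two_pow (by omega)
      _ = n * (j + 1) * (n - 2) ^ j := by ring
      _ ≤ (j + 2) * (n - 2) * (n - 2) ^ j := by gcongr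
      _ = (j + 1 + 1) * (n - 2) ^ (j + 1) := by ring

lemma pow_le_mul_choose {k n h : ℕ} (hk : 0 < k) (hn : 2 * k ≤ n) (hh : k * n ≤ 2 * h + 2) :
    n ^ k ≤ k * n * h.choose (k - 1) := by
  obtain ⟨j, rfl⟩ : ∃ j, k = j + 1 := ⟨k - 1, by omega⟩
  rw [Nat.add_sub_cancel]
  have hsub : (j + 1) * (n - 2) + (j + 1) * 2 = (j + 1) * n := by
    rw [← mul_add, Nat.sub_add_cancel (by omega)]
  have hwin : (j + 1) * (n - 2) ≤ 2 * (h + 1 - j) := by omega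
  refine Nat.le_of_mul_le_mul_right ?_ (by positivity : 0 < j ! * 2 ^ j)
  calc n ^ (j + 1) * (j ! * 2 ^ j) ≤ n ^ (j + 1) * (j + 1) ^ j := by
        gcongr; exact factorial_mul_two_pow_le j
    _ = (j + 1) ^ j * n * n ^ j := by ring
    _ ≤ (j + 1) ^ j * n * ((j + 1) * (n - 2) ^ j) := by
        gcongr; exact pow_le_succ_mul_sub_two_pow (by omega)
    _ = (j + 1) * n * ((j + 1) * (n - 2)) ^ j := by rw [mul_pow]; ring
    _ ≤ (j + 1) * n * (2 * (h + 1 - j)) ^ j := by gcongr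
    _ = (j + 1) * n * (h + 1 - j) ^ j * 2 ^ j := by rw [mul_pow]; ring
    _ ≤ (j + 1) * n * (j ! * h.choose j) * 2 ^ j := by
        rw [← Nat.descFactorial_eq_factorial_mul_choose]
        gcongr
        exact Nat.pow_sub_le_descFactorial h j
    _ = (j + 1) * n * h.choose j * (j ! * 2 ^ j) := by ring

lemma mul_choose_le_pow {k n m : ℕ} (hk : 0 < k) (hn : k * 2 ^ m ≤ n) :
    k * n * m.choose (k - 1) ≤ n ^ k := by
  rcases (show k = 1 ∨ 2 ≤ k by omega) with rfl | hk2
  · simp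
  calc k * n * m.choose (k - 1) ≤ n * (k * 2 ^ m) := by
        rw [mul_comm k n, mul_assoc]; gcongr; exact Nat.choose_le_two_pow m (k - 1)
    _ ≤ n ^ 2 := by rw [sq]; gcongr
    _ ≤ n ^ k := Nat.pow_le_pow_right (lt_of_lt_of_le (by positivity) hn) hk2

lemma mul_dvd_pow_of_dvd {k n : ℕ} (hk : 0 < k) (h : k ∣ n) : k * n ∣ n ^ k := by
  rcases (show k = 1 ∨ 2 ≤ k by omega) with rfl | hk2
  · simp
  exact (mul_dvd_mul_right h n).trans (sq n ▸ pow_dvd_pow n hk2)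

theorem stmt0_general (k d : ℕ) (hk : 0 < k) :
    ∃ N : ℕ, ∀ n : ℕ, N ≤ n → k ∣ n →
      ∃ S : Finset (Finset (Fin (k * n))),
        S.card = n ^ k ∧
        (∀ A ∈ S, A.card = k) ∧
        (∀ A : Finset (Fin (k * n)), A.card = k → (∀ a ∈ A, (a : ℕ) < d) → A ∈ S) ∧
        (∃ m : ℕ, ∀ x : Fin (k * n), (S.filter (fun A => x ∈ A)).card = m) := by
  refine ⟨k * 2 ^ (d - 1) + 2 * (d + k), fun n hn hkn ↦ ?_⟩
  have hn_le : n ≤ k * n := Nat.le_mul_of_pos_left n hk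
  have : NeZero (k * n) := ⟨by omega⟩
  let wO : Fin (k * n) := ⟨d - 1, by omega⟩
  let wF : Fin (k * n) := ⟨(k * n - 1) / 2, by omega⟩
  have hwF : 2 * wF.val < k * n := by simp only [wF]; omega
  have hwOF : wO ≤ wF := by simp only [wO, wF, Fin.le_def]; omega
  have hO : #(windowSets k wO) = k * n * (d - 1).choose (k - 1) := by
    rw [card_windowSets (by have := Fin.le_def.mp hwOF; omega), card_anchoredSets hk]
  obtain ⟨m, hm⟩ : k * n ∣ n ^ k - #(windowSets k wO) :=
    Nat.dvd_sub (mul_dvd_pow_of_dvd hk hkn) (hO ▸ dvd_mul_right _ _)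
  have hOle : #(windowSets k wO) ≤ n ^ k := hO ▸ mul_choose_le_pow hk (by omega)
  have hFge : n ^ k ≤ #(windowSets k wF) := by
    rw [card_windowSets hwF, card_anchoredSets hk]
    exact pow_le_mul_choose hk (by omega) (by simp only [wF]; omega)
  have hOF : #(windowSets k wO) + m * Fintype.card (Fin (k * n)) = n ^ k := by
    rw [Fintype.card_fin, mul_comm m]; omega
  obtain ⟨S, hS, hOS, hSF, hScard⟩ := exists_translationInvariant_between
    (O := windowSets k wO) (F := windowSets k wF) translationInvariant_windowSets
    (fun A hA t ↦ eq_zero_of_vadd_eq_self_of_mem_windowSets hwF hA)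
    translationInvariant_windowSets
    (windowSets_mono hwOF) m (hOF ▸ hFge)
  refine ⟨S, hScard.trans hOF, fun A hA ↦ card_of_mem_windowSets (hSF hA),
    fun A hAk hAd ↦ hOS (mem_windowSets_of_forall_val_le hk hAk fun a ha ↦ ?_), _,
    fun x ↦ hS.card_filter_mem_eq x 0⟩
  have := hAd a ha
  show a.val ≤ d - 1
  omega

/-- For `0 < k < d`, if `n` is a sufficiently large multiple of `k`, there is a
collection `S` of `n^k` many `k`-element subsets of `{0,...,kn-1}` containing every `k`-element
subset of `{0,...,d-1}`, such that every element appears in the same number of sets of `S`. -/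
theorem stmt0 (k d : ℕ) (hk : 0 < k) (hkd : k < d) :
    ∃ N : ℕ, ∀ n : ℕ, N ≤ n → k ∣ n →
      ∃ S : Finset (Finset (Fin (k * n))),
        S.card = n ^ k ∧
        (∀ A ∈ S, A.card = k) ∧
        (∀ A : Finset (Fin (k * n)), A.card = k → (∀ a ∈ A, (a : ℕ) < d) → A ∈ S) ∧
        (∃ m : ℕ, ∀ x : Fin (k * n), (S.filter (fun A => x ∈ A)).card = m) :=
  stmt0_general k d hk
end

section
/- Fix r >= 1 and a permutation σ of {1,...,r}. Define an equivalence-like relation on D^r by t ~_k t' for all k, where ~_0 is trivial and the relation is refined by the indicator-problem structure. Then any satisfying assignment ν : D^r → D of the indicator problem of order r that is constant on iterated-degree equivalence classes is a symmetric operation, i.e., ν(t_1,...,t_r) = ν(t_{σ(1)},...,t_{σ(r)}) for all permutations σ. -/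
/-- Iterated degree equivalence on a labelled graph: `degEq side N k v w` states that the `k`-th
iterated degrees of `v` and `w` coincide. -/
def degEq {V L : Type} (side : V → Bool) (N : V → Multiset (L × V)) :
    ℕ → V → V → Prop
  | 0, v, w => side v = side w
  | k + 1, v, w => side v = side w ∧
      Multiset.Rel (fun p q => p.1 = q.1 ∧ degEq side N k p.2 q.2) (N v) (N w)

/-- The labelled factor graph of a CSP instance with variables `X`, finite domain `D` and
constraints indexed by `C` (with scopes `scope` and relations `rel`): nodes are `X ⊕ C`, and an
edge between `x` and `c` is labelled by `(arity c, {i ∣ s_c[i] = x}, rel c)`. -/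
def nbhd {D X C : Type} [Fintype D] [DecidableEq D] [Fintype C] [DecidableEq X]
    (arity : C → ℕ) (scope : (c : C) → Fin (arity c) → X)
    (rel : (c : C) → Finset (Fin (arity c) → D)) :
    (X ⊕ C) → Multiset ((Σ k : ℕ, Finset (Fin k) × Finset (Fin k → D)) × (X ⊕ C))
  | Sum.inl x => (Finset.univ.filter (fun c : C => ∃ i, scope c i = x)).val.map
      (fun c => (⟨arity c, (Finset.univ.filter (fun i => scope c i = x), rel c)⟩, Sum.inr c))
  | Sum.inr c => ((Finset.univ.image (scope c)).val).map
      (fun x => (⟨arity c, (Finset.univ.filter (fun i => scope c i = x), rel c)⟩, Sum.inl x))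

lemma degEq_of_map {V L : Type} (side : V → Bool) (N : V → Multiset (L × V)) (φ : V → V)
    (hside : ∀ v, side (φ v) = side v)
    (hN : ∀ v, N (φ v) = (N v).map (fun p => (p.1, φ p.2))) :
    ∀ k v, degEq side N k v (φ v) := by
  intro k
  induction k with
  | zero => exact fun v => (hside v).symm
  | succ k ih =>
    intro v
    refine ⟨(hside v).symm, ?_⟩
    rw [hN v, Multiset.rel_map_right]
    exact Multiset.rel_refl_of_refl_on (fun p _ => ⟨rfl, ih p.2⟩)

/-- Fix `r ≥ 1` and a constraint language `Γ` over a finite domain `D`, given by an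
indexed family of relations `relΓ i` of arity `ar i`.  Consider the indicator problem of order
`r` for `Γ`: its variables are the tuples in `D^r` and its constraints are indexed by pairs of an
`i : ι` and a choice of `r` tuples of `relΓ i`, with scope `s j = (t 1 j, ..., t r j)`.  Any
satisfying assignment `ν : D^r → D` of the indicator problem that is constant on iterated-degree
equivalence classes of the factor graph is a symmetric operation:
`ν(t_1,...,t_r) = ν(t_{σ(1)},...,t_{σ(r)})` for every permutation `σ`. -/
theorem stmt9 (D : Type) [Fintype D] [DecidableEq D]
    (ι : Type) [Fintype ι] [DecidableEq ι]
    (ar : ι → ℕ) (relΓ : (i : ι) → Finset (Fin (ar i) → D))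
    (r : ℕ) (hr : 1 ≤ r)
    (ν : (Fin r → D) → D)
    (hν : ∀ c : Σ i : ι, Fin r → {u : Fin (ar i) → D // u ∈ relΓ i},
      (fun j => ν (fun a => (c.2 a).1 j)) ∈ relΓ c.1)
    (hconst : ∀ x y : Fin r → D,
      (∀ k : ℕ, degEq Sum.isLeft
          (nbhd (C := Σ i : ι, Fin r → {u : Fin (ar i) → D // u ∈ relΓ i})
            (fun c => ar c.1) (fun c j a => (c.2 a).1 j) (fun c => relΓ c.1))
          k (Sum.inl x) (Sum.inl y)) →
      ν x = ν y) :
    ∀ (σ : Equiv.Perm (Fin r)) (t : Fin r → D), ν (fun a => t (σ a)) = ν t := by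
  intro σ t
  classical
  set C := (Σ i : ι, Fin r → {u : Fin (ar i) → D // u ∈ relΓ i}) with hCdef
  set τ : Equiv.Perm (Fin r) := σ.symm with hτ
  set fX : (Fin r → D) → (Fin r → D) := fun x a => x (τ a) with hfX
  set eC : C ≃ C :=
    Equiv.sigmaCongrRight (fun i => Equiv.arrowCongr τ.symm (Equiv.refl _)) with heC
  set φ : ((Fin r → D) ⊕ C) → ((Fin r → D) ⊕ C) := Sum.map fX eC with hφ
  have heCapp : ∀ c : C, eC c = ⟨c.1, fun a => c.2 (τ a)⟩ := fun c => rfl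
  have heCsymm : ∀ c : C, eC.symm c = ⟨c.1, fun a => c.2 (τ.symm a)⟩ := fun c => rfl
  have hfXinj : Function.Injective fX := fun x y h => by
    funext a
    simpa only [hfX, Equiv.apply_symm_apply] using congrFun h (τ.symm a)
  set N := nbhd (C := C) (fun c => ar c.1) (fun c j a => (c.2 a).1 j) (fun c => relΓ c.1)
    with hN
  -- the inner filter (edge labels) is preserved
  have hfilt2 : ∀ (c : C) (x : Fin r → D),
      (Finset.univ.filter (fun i : Fin (ar (eC c).1) =>
        (fun a => ((eC c).2 a).1 i) = fX x)) =
      (Finset.univ.filter (fun i : Fin (ar c.1) => (fun a => (c.2 a).1 i) = x)) := by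
    intro c x
    apply Finset.filter_congr
    intro i _
    exact ⟨fun h => hfXinj h, fun h => congrArg fX h⟩
  have hNmap : ∀ v, N (φ v) = (N v).map (fun p => (p.1, φ p.2)) := by
    intro v
    match v with
    | Sum.inl x =>
      show N (Sum.inl (fX x)) = _
      rw [hN]
      simp only [nbhd, Multiset.map_map]
      have hP : ∀ d : C,
          (∃ i, (fun a => ((eC d).2 a).1 i) = fX x) ↔ (∃ i, (fun a => (d.2 a).1 i) = x) :=
        fun d => exists_congr (fun i => ⟨fun h => hfXinj h, fun h => congrArg fX h⟩)
      have hfilt : (Finset.univ.filter (fun c : C => ∃ i, (fun a => (c.2 a).1 i) = fX x)) =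
          (Finset.univ.filter (fun c : C => ∃ i, (fun a => (c.2 a).1 i) = x)).map
            eC.toEmbedding := by
        ext c
        simp only [Finset.mem_filter, Finset.mem_map, Finset.mem_univ, true_and,
          Equiv.coe_toEmbedding]
        constructor
        · intro h
          refine ⟨eC.symm c, ?_, eC.apply_symm_apply c⟩
          rw [← eC.apply_symm_apply c] at h
          exact (hP (eC.symm c)).mp h
        · rintro ⟨d, hd, rfl⟩
          exact (hP d).mpr hd
      rw [hfilt, Finset.map_val, Multiset.map_map]
      apply Multiset.map_congr rfl
      intro c _
      simp only [Function.comp_apply, Equiv.coe_toEmbedding]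
      exact congrArg (fun s => ((⟨ar c.1, (s, relΓ c.1)⟩ :
        (Σ k : ℕ, Finset (Fin k) × Finset (Fin k → D))),
        (Sum.inr (eC c) : (Fin r → D) ⊕ C))) (hfilt2 c x)
    | Sum.inr c =>
      show N (Sum.inr (eC c)) = _
      rw [hN]
      simp only [nbhd, Multiset.map_map]
      have himg : (Finset.univ.image (fun j a => ((eC c).2 a).1 j)) =
          (Finset.univ.image (fun j a => (c.2 a).1 j)).map ⟨fX, hfXinj⟩ := by
        rw [Finset.map_eq_image, Finset.image_image]
        rfl
      rw [himg, Finset.map_val, Multiset.map_map]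
      apply Multiset.map_congr rfl
      intro x _
      simp only [Function.comp_apply, Function.Embedding.coeFn_mk]
      exact congrArg (fun s => ((⟨ar c.1, (s, relΓ c.1)⟩ :
        (Σ k : ℕ, Finset (Fin k) × Finset (Fin k → D))),
        (Sum.inl (fX x) : (Fin r → D) ⊕ C))) (hfilt2 c x)
  have hside : ∀ v, Sum.isLeft (φ v) = Sum.isLeft v := by
    intro v; cases v <;> rfl
  have hdeg := degEq_of_map Sum.isLeft N φ hside hNmap
  have hφx : φ (Sum.inl (fun a => t (σ a))) = Sum.inl t := by
    simp only [hφ, Sum.map_inl]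
    congr 1
    funext a
    simp [hfX, hτ]
  apply hconst
  intro k
  have := hdeg k (Sum.inl (fun a => t (σ a)))
  rwa [hφx] at this
end

section
/- Let D be a finite set, Γ a set of relations on D closed under the polymorphism operations, and suppose for each r there is an r-ary symmetric polymorphism. Let J ⊆ D be minimal such that J = f(D) for some unary polymorphism f of Γ. Then for every r >= 1 there is an r-ary symmetric polymorphism g of Γ with g(x,...,x) = x for every x ∈ J. -/
/-!
Put `h := f ∘ δ`, where `δ x = g₀(x, …, x)` is the diagonal of a symmetric polymorphism `g₀` and
`f(D) = J`. Then `h` is a unary polymorphism with `h(D) ⊆ J`, and so is `h ∘ h`; by minimality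
`h(D) = h(h(D)) = J`, so `h` permutes the finite set `J` and some iterate `h^[k]`, `k > 0`, is the
identity on `J`. The operation `h^[k-1] ∘ f ∘ g₀` is then symmetric, a polymorphism, and on the
diagonal of `J` it is `h^[k]`.
-/

open Function Set

theorem Set.BijOn.exists_iterate_eqOn_id {α : Type*} {s : Set α} {f : α → α} (hs : s.Finite)
    (hf : BijOn f s s) : ∃ k, 0 < k ∧ EqOn f^[k] id s := by
  have : Finite s := hs.to_subtype
  obtain ⟨k, hk, hpow⟩ := (isOfFinOrder_of_finite hf.equiv).exists_pow_eq_one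
  refine ⟨k, hk, fun x hx => ?_⟩
  have := congr_arg Subtype.val (Equiv.congr_fun hpow ⟨x, hx⟩)
  rw [Equiv.Perm.coe_one, id_eq, Equiv.Perm.coe_pow] at this
  exact (hf.mapsTo.coe_iterate_restrict ⟨x, hx⟩ k).symm.trans this

section Polymorphism

variable {D ι : Type*} {A : ι → Type*} (rel : (i : ι) → Set (A i → D))

def IsPolymorphism {n : Type*} (g : (n → D) → D) : Prop :=
  ∀ (i : ι) (t : n → A i → D), (∀ a, t a ∈ rel i) → (fun j => g (fun a => t a j)) ∈ rel i

def IsUnaryPolymorphism (f : D → D) : Prop :=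
  ∀ (i : ι) (t : A i → D), t ∈ rel i → f ∘ t ∈ rel i

def IsSymmetricOperation {n : Type*} (g : (n → D) → D) : Prop :=
  ∀ (σ : Equiv.Perm n) (x : n → D), g (x ∘ σ) = g x

variable {rel}

theorem IsUnaryPolymorphism.comp {f g : D → D} (hf : IsUnaryPolymorphism rel f)
    (hg : IsUnaryPolymorphism rel g) : IsUnaryPolymorphism rel (f ∘ g) :=
  fun i t ht => hf i _ (hg i t ht)

theorem IsUnaryPolymorphism.iterate {f : D → D} (hf : IsUnaryPolymorphism rel f) :
    ∀ k, IsUnaryPolymorphism rel f^[k]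
  | 0 => fun _ _ ht => ht
  | k + 1 => (hf.iterate k).comp hf

theorem IsUnaryPolymorphism.comp_isPolymorphism {n : Type*} {f : D → D} {g : (n → D) → D}
    (hf : IsUnaryPolymorphism rel f) (hg : IsPolymorphism rel g) : IsPolymorphism rel (f ∘ g) :=
  fun i t ht => hf i _ (hg i t ht)

theorem IsPolymorphism.diagonal {n : Type*} {g : (n → D) → D} (hg : IsPolymorphism rel g) :
    IsUnaryPolymorphism rel fun x => g fun _ => x :=
  fun i t ht => hg i (fun _ => t) fun _ => ht

theorem bijOn_of_range_subset_of_minimal {J : Set D} (hJ : J.Finite)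
    (hmin : ∀ f, IsUnaryPolymorphism rel f → range f ⊆ J → range f = J)
    {h : D → D} (hh : IsUnaryPolymorphism rel h) (hsub : range h ⊆ J) : BijOn h J J := by
  have hrange : range h = J := hmin h hh hsub
  have hrange₂ : range (h ∘ h) = J :=
    hmin _ (hh.comp hh) ((range_comp_subset_range h h).trans hsub)
  have himage : h '' J = J :=
    calc h '' J = h '' range h := by rw [hrange]
      _ = J := by rw [← range_comp, hrange₂]
  exact (hJ.surjOn_iff_bijOn_of_mapsTo (mapsTo_iff_image_subset.2 himage.subset)).1
    himage.superset

theorem exists_symmetric_polymorphism_eq_self_on_diagonal [Finite D] {n : Type*} {J : Set D}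
    {f : D → D} (hf : IsUnaryPolymorphism rel f) (hfJ : range f = J)
    (hmin : ∀ f, IsUnaryPolymorphism rel f → range f ⊆ J → range f = J)
    {g₀ : (n → D) → D} (hg₀sym : IsSymmetricOperation g₀) (hg₀ : IsPolymorphism rel g₀) :
    ∃ g : (n → D) → D, IsSymmetricOperation g ∧ IsPolymorphism rel g ∧
      ∀ x ∈ J, g (fun _ => x) = x := by
  set h : D → D := f ∘ fun x => g₀ fun _ => x
  have hh : IsUnaryPolymorphism rel h := hf.comp hg₀.diagonal
  have hbij : BijOn h J J :=
    bijOn_of_range_subset_of_minimal (toFinite J) hmin hh (hfJ ▸ range_comp_subset_range _ _)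
  obtain ⟨k, hk, hid⟩ := hbij.exists_iterate_eqOn_id (toFinite J)
  refine ⟨h^[k - 1] ∘ f ∘ g₀, fun σ x => by simp only [comp_apply, hg₀sym σ x],
    (hh.iterate _).comp_isPolymorphism (hf.comp_isPolymorphism hg₀), fun x hx => ?_⟩
  calc (h^[k - 1] ∘ f ∘ g₀) (fun _ => x) = h^[k - 1 + 1] x := (iterate_succ_apply _ _ _).symm
    _ = x := by rw [Nat.sub_add_cancel hk]; exact hid hx

end Polymorphism

/-- Let `D` be finite and `Γ` (given as an indexed family of relations) have an
`r`-ary symmetric polymorphism for every `r`.  Let `J ⊆ D` be minimal with `J = f(D)` for some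
unary polymorphism `f` of `Γ`.  Then for every `r ≥ 1` there is an `r`-ary symmetric polymorphism
`g` of `Γ` with `g(x,...,x) = x` for every `x ∈ J`. -/
theorem stmt14 (D : Type) [Fintype D]
    (ι : Type) (ar : ι → ℕ) (rel : (i : ι) → Set (Fin (ar i) → D))
    (hsym : ∀ r : ℕ, ∃ f : (Fin r → D) → D,
      (∀ (σ : Equiv.Perm (Fin r)) (x : Fin r → D), f (x ∘ σ) = f x) ∧
      (∀ (i : ι) (t : Fin r → Fin (ar i) → D), (∀ a, t a ∈ rel i) →
        (fun j => f (fun a => t a j)) ∈ rel i))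
    (J : Set D)
    (hJ : ∃ f : D → D, (∀ (i : ι) (t : Fin (ar i) → D), t ∈ rel i → (f ∘ t) ∈ rel i) ∧
      Set.range f = J)
    (hmin : ∀ f : D → D, (∀ (i : ι) (t : Fin (ar i) → D), t ∈ rel i → (f ∘ t) ∈ rel i) →
      Set.range f ⊆ J → Set.range f = J) :
    ∀ r : ℕ, 1 ≤ r → ∃ g : (Fin r → D) → D,
      (∀ (σ : Equiv.Perm (Fin r)) (x : Fin r → D), g (x ∘ σ) = g x) ∧
      (∀ (i : ι) (t : Fin r → Fin (ar i) → D), (∀ a, t a ∈ rel i) →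
        (fun j => g (fun a => t a j)) ∈ rel i) ∧
      (∀ x ∈ J, g (fun _ => x) = x) := by
  obtain ⟨f, hf, hfJ⟩ := hJ
  intro r _
  obtain ⟨g₀, hg₀sym, hg₀⟩ := hsym r
  exact exists_symmetric_polymorphism_eq_self_on_diagonal hf hfJ hmin hg₀sym hg₀
end

section
/- Let S ⊆ X × D be a safe set system for a CSP instance I, and let (x,d) ∈ S be a pair that is not S-supported. Then S \ {(x,d)} is safe. -/
/-- A walk `x_0 c_0 x_1 ⋯ c_{l-1} x_l` in the factor graph, encoded by its starting variable
`x_0` and the list of steps `(c_0,x_1), …, (c_{l-1},x_l)`: consecutive variables must appear in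
the scope of the connecting constraint. -/
def IsWalk {X C : Type} (arity : C → ℕ) (scope : (c : C) → Fin (arity c) → X) :
    X → List (C × X) → Prop
  | _, [] => True
  | x, (c, y) :: rest =>
      (∃ i, scope c i = x) ∧ (∃ i, scope c i = y) ∧ IsWalk arity scope y rest

/-- The final variable of a walk. -/
def walkEnd {X C : Type} : X → List (C × X) → X
  | x, [] => x
  | _, (_, y) :: rest => walkEnd y rest

/-- Propagation `B +_S p` of a set `B ⊆ S x` along a walk `p` starting at `x`, under the set
system `S`.  For a one-step walk `x c y`, the propagated set consists of all `e` such that some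
`d ∈ B` and some tuple `t ∈ rel c` satisfy `t i ∈ S (s_c i)` for all `i`, `t i = d` whenever
`s_c i = x`, and `t i = e` whenever `s_c i = y`. -/
def propagate {D X C : Type} [Fintype D] [DecidableEq D] [DecidableEq X]
    (arity : C → ℕ) (scope : (c : C) → Fin (arity c) → X)
    (rel : (c : C) → Finset (Fin (arity c) → D)) (S : X → Finset D) :
    X → Finset D → List (C × X) → Finset D
  | _, B, [] => B
  | x, B, (c, y) :: rest =>
      propagate arity scope rel S y
        (Finset.univ.filter (fun e => ∃ d ∈ B, ∃ t ∈ rel c,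
          (∀ i, t i ∈ S (scope c i)) ∧ (∀ i, scope c i = x → t i = d) ∧
          (∀ i, scope c i = y → t i = e)))
        rest

variable {D X C : Type} [Fintype D] [DecidableEq D] [Fintype X] [Fintype C] [DecidableEq X]
  (arity : C → ℕ) (scope : (c : C) → Fin (arity c) → X)
  (rel : (c : C) → Finset (Fin (arity c) → D))

/-- Two variables are iterated degree equivalent if their `k`-th iterated degrees in the factor
graph coincide for all `k`. -/
def VarEquiv (x y : X) : Prop :=
  ∀ k : ℕ, degEq Sum.isLeft (nbhd arity scope rel) k (Sum.inl x) (Sum.inl y)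

/-- `(x,d)` is `S`-supported if for every walk `p` from `x` to a variable `y` iterated degree
equivalent to `x`, the propagation `{d} +_S p` contains `d`. -/
def SSupported (S : X → Finset D) (x : X) (d : D) : Prop :=
  ∀ p : List (C × X), IsWalk arity scope x p →
    VarEquiv arity scope rel x (walkEnd x p) →
    d ∈ propagate arity scope rel S x {d} p

/-- A set system `S` is safe if every solution `ν` assigning equal values to iterated degree
equivalent variables satisfies `ν x ∈ S x` for every variable `x`. -/
def Safe (S : X → Finset D) : Prop :=
  ∀ ν : X → D, (∀ c : C, (fun i => ν (scope c i)) ∈ rel c) →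
    (∀ y z : X, VarEquiv arity scope rel y z → ν y = ν z) →
    ∀ x : X, ν x ∈ S x

lemma prop_mem (S : X → Finset D) (ν : X → D)
    (hrel : ∀ c : C, (fun i => ν (scope c i)) ∈ rel c)
    (hS : ∀ y : X, ν y ∈ S y) :
    ∀ (p : List (C × X)) (x : X) (B : Finset D), IsWalk arity scope x p → ν x ∈ B →
      ν (walkEnd x p) ∈ propagate arity scope rel S x B p := by
  intro p
  induction p with
  | nil => intro x B _ hB; exact hB
  | cons step rest ih =>
    obtain ⟨c, y⟩ := step
    intro x B hw hB
    obtain ⟨_, _, hwrest⟩ := hw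
    simp only [walkEnd, propagate]
    apply ih y _ hwrest
    classical
    simp only [Finset.mem_filter, Finset.mem_univ, true_and]
    exact ⟨ν x, hB, fun i => ν (scope c i), hrel c, fun i => hS _,
      fun i h => by dsimp only; rw [h], fun i h => by dsimp only; rw [h]⟩

/-- if `S` is a safe set system and `(x,d) ∈ S` is not `S`-supported, then
`S \ {(x,d)}` is safe. -/
theorem stmt18 (S : X → Finset D) (hsafe : Safe arity scope rel S)
    (x : X) (d : D) (hd : d ∈ S x)
    (hns : ¬ SSupported arity scope rel S x d) :
    Safe arity scope rel (fun y => if y = x then (S x).erase d else S y) := by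
  intro ν hrel hequiv y
  have hSy : ∀ z, ν z ∈ S z := hsafe ν hrel hequiv
  by_cases hy : y = x
  · subst hy
    simp only [if_pos rfl]
    refine Finset.mem_erase.mpr ⟨?_, hSy y⟩
    intro hvd
    apply hns
    intro p hw hveq
    have := prop_mem arity scope rel S ν hrel hSy p y {d} hw
      (by rw [hvd]; exact Finset.mem_singleton_self d)
    rwa [← hequiv y (walkEnd y p) hveq, hvd] at this
  · simp only [if_neg hy]
    exact hSy y
end

section
/- If (x,d) ∈ S is not S-supported, then a minimal-length witnessing walk has length at most n·2^{|D|}: any walk p from x to some y with x ~_δ y and d ∉ {d} +_S p of minimal length l satisfies l <= n·2^{|D|}, where n = |X|. -/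
variable {D X C : Type} [Fintype D] [DecidableEq D] [Fintype X] [Fintype C] [DecidableEq X]
  (arity : C → ℕ) (scope : (c : C) → Fin (arity c) → X)
  (rel : (c : C) → Finset (Fin (arity c) → D))

lemma walkEnd_append (x : X) (p q : List (C × X)) :
    walkEnd x (p ++ q) = walkEnd (walkEnd x p) q := by
  induction p generalizing x with
  | nil => rfl
  | cons a rest ih => cases a; simp [walkEnd, ih]

lemma isWalk_append (x : X) (p q : List (C × X)) :
    IsWalk arity scope x (p ++ q) ↔
      IsWalk arity scope x p ∧ IsWalk arity scope (walkEnd x p) q := by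
  induction p generalizing x with
  | nil => simp [IsWalk, walkEnd]
  | cons a rest ih => cases a; simp [IsWalk, walkEnd, ih, and_assoc]

lemma propagate_append (S : X → Finset D) (x : X) (B : Finset D) (p q : List (C × X)) :
    propagate arity scope rel S x B (p ++ q) =
      propagate arity scope rel S (walkEnd x p) (propagate arity scope rel S x B p) q := by
  induction p generalizing x B with
  | nil => rfl
  | cons a rest ih => cases a; simp [propagate, walkEnd, ih]

/-- if `(x,d) ∈ S` is not `S`-supported, then any minimal-length witnessing walk
(a walk `p` from `x` to a variable iterated degree equivalent to `x` with `d ∉ {d} +_S p`) has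
length at most `n·2^|D|`, where `n = |X|`. -/
theorem stmt19 (S : X → Finset D) (x : X) (d : D) (hd : d ∈ S x)
    (p : List (C × X))
    (hwalk : IsWalk arity scope x p)
    (hequiv : VarEquiv arity scope rel x (walkEnd x p))
    (hwit : d ∉ propagate arity scope rel S x {d} p)
    (hmin : ∀ q : List (C × X), IsWalk arity scope x q →
      VarEquiv arity scope rel x (walkEnd x q) →
      d ∉ propagate arity scope rel S x {d} q →
      p.length ≤ q.length) :
    p.length ≤ Fintype.card X * 2 ^ Fintype.card D := by
  set l := p.length with hl
  set f : Fin (l + 1) → X × Finset D := fun i =>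
    (walkEnd x (p.take i), propagate arity scope rel S x {d} (p.take i)) with hf
  have key : ∀ a b : Fin (l + 1), a < b → f a ≠ f b := by
    intro a b hab heq
    have hbl : (b : ℕ) ≤ l := Nat.lt_succ_iff.mp b.isLt
    have hend : walkEnd x (p.take a) = walkEnd x (p.take b) := congrArg Prod.fst heq
    have hprop : propagate arity scope rel S x {d} (p.take a) =
        propagate arity scope rel S x {d} (p.take b) := congrArg Prod.snd heq
    set q : List (C × X) := p.take a ++ p.drop b with hq
    have hsplit : p.take b ++ p.drop b = p := List.take_append_drop b p
    -- walk property
    have hwalk' : IsWalk arity scope x (p.take b) ∧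
        IsWalk arity scope (walkEnd x (p.take b)) (p.drop b) := by
      rw [← isWalk_append, hsplit]; exact hwalk
    have hqwalk : IsWalk arity scope x q := by
      rw [hq, isWalk_append, hend]
      refine ⟨?_, hwalk'.2⟩
      exact ((isWalk_append arity scope x (p.take a) (p.drop a)).mp
        (by rw [List.take_append_drop]; exact hwalk)).1
    -- end
    have hqend : walkEnd x q = walkEnd x p := by
      rw [hq, walkEnd_append, hend, ← walkEnd_append, hsplit]
    -- propagation
    have hqprop : propagate arity scope rel S x {d} q =
        propagate arity scope rel S x {d} p := by
      rw [hq, propagate_append, hend, hprop, ← propagate_append, hsplit]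
    -- length
    have hab' : (a : ℕ) < b := hab
    have hlen : q.length < l := by
      have : q.length = min (↑a) l + (l - ↑b) := by
        simp [hq, List.length_take, List.length_drop, ← hl]
      omega
    have := hmin q hqwalk (hqend ▸ hequiv) (hqprop ▸ hwit)
    omega
  have hinj : Function.Injective f := by
    intro a b hab
    rcases lt_trichotomy a b with h | h | h
    · exact absurd hab (key a b h)
    · exact h
    · exact absurd hab.symm (key b a h)
  have hcard := Fintype.card_le_of_injective f hinj
  simp [Fintype.card_prod, Fintype.card_finset] at hcard
  omega
end
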